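/- Let E be a finite-dimensional vector space over a field, α ∈ E∨ and β ∈ E with α(β) = 0. If β is nonzero, then the 2-periodic Koszul complex on Λ•E∨ with differential α∧· + ι_β is exact. -/
import Mathlib
set_option maxHeartbeats 1000000


open ExteriorAlgebra Module

/-- The operator `(α ∧ ·) + ι_β` on `Λ• E∨`. -/
noncomputable def koszulD (k : Type*) {E : Type*} [Field k] [AddCommGroup E] [Module k E]
    (α : Module.Dual k E) (β : E) :
    ExteriorAlgebra k (Module.Dual k E) →ₗ[k] ExteriorAlgebra k (Module.Dual k E) :=
  LinearMap.mulLeft k (ExteriorAlgebra.ι k α) +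
    CliffordAlgebra.contractLeft (Module.Dual.eval k E β)

/-- if `α β = 0` and `β ≠ 0`, the 2-periodic Koszul complex on `Λ• E∨`
with differential `α∧· + ι_β` is exact. -/
theorem koszul_exact_of_section_nonzero (k E : Type*) [Field k] [AddCommGroup E] [Module k E]
    [FiniteDimensional k E] (α : Module.Dual k E) (β : E) (h : α β = 0) (hβ : β ≠ 0) :
    LinearMap.ker (koszulD k α β) = LinearMap.range (koszulD k α β) := by
  obtain ⟨γ, hγ⟩ : ∃ γ : Module.Dual k E, γ β = 1 := by
    have : ¬ ∀ φ : Module.Dual k E, φ β = 0 := by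
      rw [Module.forall_dual_apply_eq_zero_iff]; exact hβ
    push_neg at this
    obtain ⟨φ, hφ⟩ := this
    exact ⟨(φ β)⁻¹ • φ, by simp [inv_mul_cancel₀ hφ]⟩
  have hd : ∀ x, koszulD k α β x =
      ι k α * x + CliffordAlgebra.contractLeft (Module.Dual.eval k E β) x := fun x => rfl
  -- d ∘ d = 0
  have hdd : ∀ x, koszulD k α β (koszulD k α β x) = 0 := by
    intro x
    simp only [hd, map_add, mul_add, CliffordAlgebra.contractLeft_ι_mul,
      CliffordAlgebra.contractLeft_contractLeft, Module.Dual.eval_apply, h, zero_smul,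
      ← mul_assoc, ι_sq_zero, zero_mul]
    abel
  -- homotopy: d (γ * x) + γ * d x = x
  have key : ∀ x, koszulD k α β (ι k γ * x) + ι k γ * koszulD k α β x = x := by
    intro x
    simp only [hd, mul_add, CliffordAlgebra.contractLeft_ι_mul, Module.Dual.eval_apply, hγ, one_smul]
    have h0 : ι k α * (ι k γ * x) + ι k γ * (ι k α * x) = 0 := by
      rw [← mul_assoc, ← mul_assoc, ← add_mul, ι_add_mul_swap, zero_mul]
    rw [show ∀ a b c d : ExteriorAlgebra k (Module.Dual k E),
        a + (x - b) + (c + d) = (a + c) + (d - b) + x from fun a b c d => by abel, h0,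
      zero_add,
      show (CliffordAlgebra.ι 0) γ = ι k γ from rfl, sub_self, zero_add]
  ext x
  constructor
  · intro hx
    rw [LinearMap.mem_ker] at hx
    refine ⟨ι k γ * x, ?_⟩
    have := key x
    rwa [hx, mul_zero, add_zero] at this
  · rintro ⟨y, rfl⟩
    exact hdd y
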